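/- arXiv:2203.12994 — 2 statements merged into one kernel-verified Lean document; each statement's English description precedes it below -/
import Mathlib

section
/- Let V be the graded Q-vector space with basis v_0, v_2, ..., v_{2m} (v_{2i} in degree 2i, all even, hence commuting polynomial generators) and W the graded vector space with basis w_{2m-1}, w_{2m+1}, ..., w_{4m-1} (odd degrees, hence exterior generators). For k ≥ 4 and m ≥ 2, the highest total degree of a monomial of weight-length k (counting each v with multiplicity 1 and each w with multiplicity 2) that is not divisible by v_{2m}² and does not contain w_{4m-1} is (2m-2)k + 3, achieved by v_{2m-2}^{k-3} v_{2m} w_{4m-3}. -/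
/-- Monomials in the generators `v_{2i}` (`0 ≤ i ≤ m`, degree `2i`) and
`w_{2(m+t)-1}` (`0 ≤ t ≤ m`, degree `2(m+t)-1`, exterior so exponent `≤ 1`) are encoded
by their exponent functions `fv`, `fw`.  The weight counts each `v` once and each `w`
twice.  For `k ≥ 4`, `m ≥ 2`, among weight-`k` monomials not divisible by `v_{2m}²`
(`fv m ≤ 1`) and not containing `w_{4m-1}` (`fw m = 0`), the highest total degree is
`(2m-2)k + 3`, achieved by `v_{2m-2}^{k-3} v_{2m} w_{4m-3}`. -/
theorem stmt_2 (m k : ℕ) (hm : 2 ≤ m) (hk : 4 ≤ k) :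
    (∀ fv fw : ℕ → ℕ,
      (∀ i, m < i → fv i = 0) → (∀ t, m < t → fw t = 0) →
      (∀ t, fw t ≤ 1) → fv m ≤ 1 → fw m = 0 →
      (∑ i ∈ Finset.range (m + 1), fv i) + 2 * (∑ t ∈ Finset.range (m + 1), fw t) = k →
      (∑ i ∈ Finset.range (m + 1), fv i * (2 * i)) +
        (∑ t ∈ Finset.range (m + 1), fw t * (2 * (m + t) - 1)) ≤ (2 * m - 2) * k + 3)
    ∧
    -- the bound is achieved by `v_{2m-2}^{k-3} v_{2m} w_{4m-3}`
    (∀ fv fw : ℕ → ℕ,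
      fv = (fun i => if i = m - 1 then k - 3 else if i = m then 1 else 0) →
      fw = (fun t => if t = m - 1 then 1 else 0) →
      (∑ i ∈ Finset.range (m + 1), fv i) + 2 * (∑ t ∈ Finset.range (m + 1), fw t) = k ∧
      (∑ i ∈ Finset.range (m + 1), fv i * (2 * i)) +
        (∑ t ∈ Finset.range (m + 1), fw t * (2 * (m + t) - 1)) = (2 * m - 2) * k + 3) := by
  constructor
  · intro fv fw hv0 hw0 hw1 hvm hwm hsum
    have hVle : ∀ i ∈ Finset.range (m + 1),
        fv i * (2 * i) ≤ fv i * (2 * m - 2) + (if i = m then 2 else 0) := by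
      intro i hi
      simp only [Finset.mem_range] at hi
      by_cases him : i = m
      · subst him
        rcases Nat.le_one_iff_eq_zero_or_eq_one.mp hvm with h | h <;> rw [h, if_pos rfl] <;> omega
      · simp only [if_neg him]
        have : fv i * (2 * i) ≤ fv i * (2 * m - 2) :=
          Nat.mul_le_mul_left _ (by omega)
        omega
    have hWle : ∀ t ∈ Finset.range (m + 1),
        fw t * (2 * (m + t) - 1) ≤ fw t * (4 * m - 4) + (if t = m - 1 then 1 else 0) := by
      intro t ht
      simp only [Finset.mem_range] at ht
      by_cases htm : t = m - 1
      · subst htm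
        rcases Nat.le_one_iff_eq_zero_or_eq_one.mp (hw1 (m - 1)) with h | h <;>
          rw [h, if_pos rfl] <;> omega
      · simp only [if_neg htm]
        by_cases ht2 : t = m
        · subst ht2; simp [hwm]
        · have : fw t * (2 * (m + t) - 1) ≤ fw t * (4 * m - 4) :=
            Nat.mul_le_mul_left _ (by omega)
          omega
    have hV := Finset.sum_le_sum hVle
    have hW := Finset.sum_le_sum hWle
    rw [Finset.sum_add_distrib, ← Finset.sum_mul,
      Finset.sum_ite_eq' (Finset.range (m + 1)) m (fun _ => 2)] at hV
    rw [Finset.sum_add_distrib, ← Finset.sum_mul,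
      Finset.sum_ite_eq' (Finset.range (m + 1)) (m - 1) (fun _ => 1)] at hW
    simp only [Finset.mem_range, if_pos (by omega : m < m + 1),
      if_pos (by omega : m - 1 < m + 1)] at hV hW
    set A := ∑ i ∈ Finset.range (m + 1), fv i with hA
    set B := ∑ t ∈ Finset.range (m + 1), fw t with hB
    have hc : 4 * m - 4 = 2 * (2 * m - 2) := by omega
    have : (2 * m - 2) * k = A * (2 * m - 2) + B * (4 * m - 4) := by
      rw [← hsum, hc]; ring
    omega
  · intro fv fw hfv hfw
    subst hfv hfw
    obtain ⟨c, rfl⟩ : ∃ c, m = c + 2 := ⟨m - 2, by omega⟩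
    obtain ⟨d, rfl⟩ : ∃ d, k = d + 4 := ⟨k - 4, by omega⟩
    have e1 : c + 2 - 1 = c + 1 := by omega
    have e2 : d + 4 - 3 = d + 1 := by omega
    simp only [e1, e2]
    have hsplitv : ∀ i ∈ Finset.range (c + 2 + 1),
        (if i = c + 1 then d + 1 else if i = c + 2 then 1 else 0)
          = (if i = c + 1 then d + 1 else 0) + (if i = c + 2 then 1 else 0) := by
      intro i _
      by_cases h1 : i = c + 1
      · simp [h1, (by omega : c + 1 ≠ c + 2)]
      · simp [h1]
    have hsplitd : ∀ i ∈ Finset.range (c + 2 + 1),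
        (if i = c + 1 then d + 1 else if i = c + 2 then 1 else 0) * (2 * i)
          = (if i = c + 1 then (d + 1) * (2 * (c + 1)) else 0)
            + (if i = c + 2 then 2 * (c + 2) else 0) := by
      intro i _
      by_cases h1 : i = c + 1
      · simp [h1, (by omega : c + 1 ≠ c + 2)]
      · by_cases h2 : i = c + 2 <;> simp [h1, h2]
    constructor
    · rw [Finset.sum_congr rfl hsplitv, Finset.sum_add_distrib,
        Finset.sum_ite_eq' (Finset.range (c + 2 + 1)) (c + 1) (fun _ => d + 1),
        Finset.sum_ite_eq' (Finset.range (c + 2 + 1)) (c + 2) (fun _ => 1),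
        Finset.sum_ite_eq' (Finset.range (c + 2 + 1)) (c + 1) (fun _ => 1)]
      simp only [Finset.mem_range, if_pos (by omega : c + 1 < c + 2 + 1),
        if_pos (by omega : c + 2 < c + 2 + 1)]
    · have hsplitw : ∀ t ∈ Finset.range (c + 2 + 1),
          (if t = c + 1 then 1 else 0) * (2 * (c + 2 + t) - 1)
            = (if t = c + 1 then 1 * (2 * (c + 2 + (c + 1)) - 1) else 0) := by
        intro t _
        by_cases h1 : t = c + 1 <;> simp [h1]
      rw [Finset.sum_congr rfl hsplitw, Finset.sum_congr rfl hsplitd, Finset.sum_add_distrib,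
        Finset.sum_ite_eq' (Finset.range (c + 2 + 1)) (c + 1)
          (fun _ => (d + 1) * (2 * (c + 1))),
        Finset.sum_ite_eq' (Finset.range (c + 2 + 1)) (c + 2) (fun _ => 2 * (c + 2)),
        Finset.sum_ite_eq' (Finset.range (c + 2 + 1)) (c + 1)
          (fun _ => 1 * (2 * (c + 2 + (c + 1)) - 1))]
      simp only [Finset.mem_range, if_pos (by omega : c + 1 < c + 2 + 1),
        if_pos (by omega : c + 2 < c + 2 + 1)]
      have e3 : 2 * (c + 2 + (c + 1)) - 1 = 4 * c + 5 := by omega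
      have e4 : 2 * (c + 2) - 2 = 2 * c + 2 := by omega
      rw [e3, e4]
      ring
end

section
/- For m ≥ 2 and k ≥ 8, in the free graded-commutative algebra on generators v_{2i} (degree 2i, 0 ≤ i ≤ m) and w_{2j-1} (degree 2j-1, m ≤ j ≤ 2m), the space of weight-k monomials of total degree k(2m-2)+3 not divisible by v_{2m}² nor by w_{4m-1} is one-dimensional, spanned by v_{2m-2}^{k-3} v_{2m} w_{4m-3}, and the space of such monomials of degree k(2m-2)+2 and weight-grading ω = 2 (i.e. containing exactly two w-factors) is one-dimensional, spanned by v_{2m-2}^{k-5} v_{2m} w_{4m-5} w_{4m-3}. -/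
/-- Encoding monomials in `v_{2i}` (`0 ≤ i ≤ m`) and `w_{2(m+t)-1}` (`0 ≤ t ≤ m`,
exterior generators) by their exponent functions `fv, fw`, with weight counting each
`v` once and each `w` twice: for `m ≥ 2`, `k ≥ 8`, the weight-`k` monomials of total
degree `k(2m-2)+3` avoiding `v_{2m}²` and `w_{4m-1}` form exactly the singleton
`{v_{2m-2}^{k-3} v_{2m} w_{4m-3}}`, and those of degree `k(2m-2)+2` with exactly two
`w`-factors form exactly the singleton `{v_{2m-2}^{k-5} v_{2m} w_{4m-5} w_{4m-3}}`. -/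
theorem stmt_3 (m k : ℕ) (hm : 2 ≤ m) (hk : 8 ≤ k) :
    (∀ fv fw : ℕ → ℕ,
      (∀ i, m < i → fv i = 0) → (∀ t, m < t → fw t = 0) →
      (∀ t, fw t ≤ 1) → fv m ≤ 1 → fw m = 0 →
      (∑ i ∈ Finset.range (m + 1), fv i) + 2 * (∑ t ∈ Finset.range (m + 1), fw t) = k →
      (∑ i ∈ Finset.range (m + 1), fv i * (2 * i)) +
          (∑ t ∈ Finset.range (m + 1), fw t * (2 * (m + t) - 1)) = k * (2 * m - 2) + 3 →
      (fv = fun i => if i = m - 1 then k - 3 else if i = m then 1 else 0) ∧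
      (fw = fun t => if t = m - 1 then 1 else 0))
    ∧
    (∀ fv fw : ℕ → ℕ,
      (∀ i, m < i → fv i = 0) → (∀ t, m < t → fw t = 0) →
      (∀ t, fw t ≤ 1) → fv m ≤ 1 → fw m = 0 →
      (∑ i ∈ Finset.range (m + 1), fv i) + 2 * (∑ t ∈ Finset.range (m + 1), fw t) = k →
      (∑ t ∈ Finset.range (m + 1), fw t) = 2 →
      (∑ i ∈ Finset.range (m + 1), fv i * (2 * i)) +
          (∑ t ∈ Finset.range (m + 1), fw t * (2 * (m + t) - 1)) = k * (2 * m - 2) + 2 →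
      (fv = fun i => if i = m - 1 then k - 5 else if i = m then 1 else 0) ∧
      (fw = fun t => if t = m - 2 then 1 else if t = m - 1 then 1 else 0)) := by
  obtain ⟨a, rfl⟩ : ∃ a, m = a + 2 := ⟨m - 2, by omega⟩
  obtain ⟨b, rfl⟩ : ∃ b, k = b + 8 := ⟨k - 8, by omega⟩
  constructor
  · intro fv fw hv hw hw1 hv1 hwm hweight hdeg
    -- normalize the degree equation
    have ecoef : ∑ t ∈ Finset.range (a + 2 + 1), fw t * (2 * (a + 2 + t) - 1)
        = ∑ t ∈ Finset.range (a + 2 + 1), fw t * (2 * a + 2 * t + 3) :=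
      Finset.sum_congr rfl fun t _ => by
        rw [show 2 * (a + 2 + t) - 1 = 2 * a + 2 * t + 3 from by omega]
    rw [ecoef, show 2 * (a + 2) - 2 = 2 * a + 2 from by omega] at hdeg
    rw [Finset.sum_range_succ, Finset.sum_range_succ,
      Finset.sum_range_succ (fun t => fw t), Finset.sum_range_succ (fun t => fw t)] at hweight
    rw [Finset.sum_range_succ, Finset.sum_range_succ,
      Finset.sum_range_succ (fun t => fw t * (2 * a + 2 * t + 3)),
      Finset.sum_range_succ (fun t => fw t * (2 * a + 2 * t + 3))] at hdeg
    rw [show (b + 8) * (2 * a + 2)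
        = ((∑ i ∈ Finset.range (a + 1), fv i) + fv (a + 1) + fv (a + 2)
          + 2 * ((∑ t ∈ Finset.range (a + 1), fw t) + fw (a + 1) + fw (a + 2))) * (2 * a + 2)
        from by rw [hweight]] at hdeg
    have h2 : (∑ i ∈ Finset.range (a + 1), fv i * (2 * i))
        ≤ (∑ i ∈ Finset.range (a + 1), fv i) * (2 * a) := by
      rw [Finset.sum_mul]
      exact Finset.sum_le_sum fun i hi =>
        Nat.mul_le_mul le_rfl (by have := Finset.mem_range.mp hi; omega)
    have h4 : (∑ t ∈ Finset.range (a + 1), fw t * (2 * a + 2 * t + 3))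
        ≤ (∑ t ∈ Finset.range (a + 1), fw t) * (4 * a + 3) := by
      rw [Finset.sum_mul]
      exact Finset.sum_le_sum fun t ht =>
        Nat.mul_le_mul le_rfl (by have := Finset.mem_range.mp ht; omega)
    have hwm' : fw (a + 2) = 0 := hwm
    rw [hwm'] at hdeg
    have key : 2 * (∑ i ∈ Finset.range (a + 1), fv i)
        + (∑ t ∈ Finset.range (a + 1), fw t) + 3 ≤ 2 * fv (a + 2) + fw (a + 1) := by
      nlinarith [h2, h4, hdeg]
    have hv1' : fv (a + 2) ≤ 1 := hv1
    have hw1' : fw (a + 1) ≤ 1 := hw1 (a + 1)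
    have hS1 : (∑ i ∈ Finset.range (a + 1), fv i) = 0 := by omega
    have hS3 : (∑ t ∈ Finset.range (a + 1), fw t) = 0 := by omega
    have hfva2 : fv (a + 2) = 1 := by omega
    have hfwa1 : fw (a + 1) = 1 := by omega
    have hfva1 : fv (a + 1) = b + 5 := by omega
    have hfv0 : ∀ i ∈ Finset.range (a + 1), fv i = 0 :=
      fun i hi => (Finset.sum_eq_zero_iff).mp hS1 i hi
    have hfw0 : ∀ t ∈ Finset.range (a + 1), fw t = 0 :=
      fun t ht => (Finset.sum_eq_zero_iff).mp hS3 t ht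
    constructor
    · funext i
      split_ifs with h1 h2'
      · have : i = a + 1 := by omega
        subst this; omega
      · subst h2'; omega
      · rcases lt_or_ge i (a + 1) with h | h
        · exact hfv0 i (Finset.mem_range.mpr h)
        · exact hv i (by omega)
    · funext t
      split_ifs with h1
      · have : t = a + 1 := by omega
        subst this; omega
      · rcases lt_or_ge t (a + 1) with h | h
        · exact hfw0 t (Finset.mem_range.mpr h)
        · have ht2 : a + 2 ≤ t := by omega
          rcases Nat.eq_or_lt_of_le ht2 with h' | h'
          · rw [← h']; exact hwm'
          · exact hw t (by omega)
  · intro fv fw hv hw hw1 hv1 hwm hweight hwsum hdeg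
    have ecoef : ∑ t ∈ Finset.range (a + 2 + 1), fw t * (2 * (a + 2 + t) - 1)
        = ∑ t ∈ Finset.range (a + 2 + 1), fw t * (2 * a + 2 * t + 3) :=
      Finset.sum_congr rfl fun t _ => by
        rw [show 2 * (a + 2 + t) - 1 = 2 * a + 2 * t + 3 from by omega]
    rw [ecoef, show 2 * (a + 2) - 2 = 2 * a + 2 from by omega] at hdeg
    rw [Finset.sum_range_succ, Finset.sum_range_succ,
      Finset.sum_range_succ (fun t => fw t), Finset.sum_range_succ (fun t => fw t)] at hweight
    rw [Finset.sum_range_succ (fun t => fw t), Finset.sum_range_succ (fun t => fw t)] at hwsum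
    rw [Finset.sum_range_succ, Finset.sum_range_succ,
      Finset.sum_range_succ (fun t => fw t * (2 * a + 2 * t + 3)),
      Finset.sum_range_succ (fun t => fw t * (2 * a + 2 * t + 3))] at hdeg
    rw [show (b + 8) * (2 * a + 2)
        = ((∑ i ∈ Finset.range (a + 1), fv i) + fv (a + 1) + fv (a + 2)
          + 2 * ((∑ t ∈ Finset.range (a + 1), fw t) + fw (a + 1) + fw (a + 2))) * (2 * a + 2)
        from by rw [hweight]] at hdeg
    have h2 : (∑ i ∈ Finset.range (a + 1), fv i * (2 * i))
        ≤ (∑ i ∈ Finset.range (a + 1), fv i) * (2 * a) := by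
      rw [Finset.sum_mul]
      exact Finset.sum_le_sum fun i hi =>
        Nat.mul_le_mul le_rfl (by have := Finset.mem_range.mp hi; omega)
    have h4 : (∑ t ∈ Finset.range (a + 1), fw t * (2 * a + 2 * t + 3))
        ≤ (∑ t ∈ Finset.range (a + 1), fw t) * (4 * a + 3) := by
      rw [Finset.sum_mul]
      exact Finset.sum_le_sum fun t ht =>
        Nat.mul_le_mul le_rfl (by have := Finset.mem_range.mp ht; omega)
    have hwm' : fw (a + 2) = 0 := hwm
    rw [hwm'] at hdeg hwsum
    have key : 2 * (∑ i ∈ Finset.range (a + 1), fv i)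
        + (∑ t ∈ Finset.range (a + 1), fw t) + 2 ≤ 2 * fv (a + 2) + fw (a + 1) := by
      nlinarith [h2, h4, hdeg]
    have hv1' : fv (a + 2) ≤ 1 := hv1
    have hw1' : fw (a + 1) ≤ 1 := hw1 (a + 1)
    have hS1 : (∑ i ∈ Finset.range (a + 1), fv i) = 0 := by omega
    have hS3 : (∑ t ∈ Finset.range (a + 1), fw t) = 1 := by omega
    have hfva2 : fv (a + 2) = 1 := by omega
    have hfwa1 : fw (a + 1) = 1 := by omega
    have hfva1 : fv (a + 1) = b + 3 := by omega
    have hS2 : (∑ i ∈ Finset.range (a + 1), fv i * (2 * i)) = 0 := by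
      have := h2; rw [hS1] at this; omega
    have hS4 : (∑ t ∈ Finset.range (a + 1), fw t * (2 * a + 2 * t + 3)) = 4 * a + 3 := by
      rw [hS1, hS2, hS3, hfva2, hfwa1] at hdeg
      linarith [hdeg]
    have hzero : (∑ t ∈ Finset.range (a + 1), fw t * (2 * (a - t))) = 0 := by
      have hsplit : ∑ t ∈ Finset.range (a + 1),
          (fw t * (2 * a + 2 * t + 3) + fw t * (2 * (a - t)))
          = ∑ t ∈ Finset.range (a + 1), fw t * (4 * a + 3) :=
        Finset.sum_congr rfl fun t ht => by
          rw [← Nat.mul_add, show 2 * a + 2 * t + 3 + 2 * (a - t) = 4 * a + 3 from by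
            have := Finset.mem_range.mp ht; omega]
      rw [Finset.sum_add_distrib, ← Finset.sum_mul, hS3, hS4, one_mul] at hsplit
      omega
    have hfwlt : ∀ t, t < a → fw t = 0 := by
      intro t ht
      have h := (Finset.sum_eq_zero_iff).mp hzero t (Finset.mem_range.mpr (by omega))
      rcases Nat.mul_eq_zero.mp h with h' | h'
      · exact h'
      · omega
    have hfwa : fw a = 1 := by
      have hsr : (∑ t ∈ Finset.range (a + 1), fw t)
          = (∑ t ∈ Finset.range a, fw t) + fw a := Finset.sum_range_succ _ _
      have hz : (∑ t ∈ Finset.range a, fw t) = 0 :=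
        Finset.sum_eq_zero fun t ht => hfwlt t (Finset.mem_range.mp ht)
      omega
    have hfv0 : ∀ i ∈ Finset.range (a + 1), fv i = 0 :=
      fun i hi => (Finset.sum_eq_zero_iff).mp hS1 i hi
    constructor
    · funext i
      split_ifs with h1 h2'
      · have : i = a + 1 := by omega
        subst this; omega
      · subst h2'; omega
      · rcases lt_or_ge i (a + 1) with h | h
        · exact hfv0 i (Finset.mem_range.mpr h)
        · exact hv i (by omega)
    · funext t
      split_ifs with h1 h2'
      · have : t = a := by omega
        subst this; omega
      · have : t = a + 1 := by omega
        subst this; omega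
      · rcases lt_or_ge t (a + 1) with h | h
        · exact hfwlt t (by omega)
        · rcases Nat.eq_or_lt_of_le h with h' | h'
          · omega
          · rcases Nat.eq_or_lt_of_le h' with h'' | h''
            · rw [← h'']; exact hwm'
            · exact hw t (by omega)
end
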